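/- Let Ω ⊆ ℝ² be a bounded domain and B_Ω a disk with |B_Ω| = |Ω| and |B_Ω \ Ω| < |B_Ω|/2. Then M₂[χ_{B_Ω}] ≤ 4·M₂[χ_Ω] + (16/π)|Ω|², and consequently M₂[χ_{B_Ω}] ≤ 36·M₂[χ_Ω]. -/

import Mathlib

/-!
For `x, y` in the disk `B_Ω` of radius `r` one has `‖x‖² ≤ 2‖y‖² + 2‖x - y‖² ≤ 2‖y‖² + 8r²`.
Averaging over `x ∈ B_Ω` and `y ∈ B_Ω ∩ Ω`, which fills more than half of `B_Ω`, gives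
`M₂[χ_{B_Ω}] ≤ 4 M₂[χ_Ω] + 8πr⁴`, and `8πr⁴ ≤ 16πr⁴ = (16/π)|Ω|²`. Moreover `16πr⁴ = 32 M₂[χ_{B'}]`
for the centred disk `B'` of area `|Ω|`, which has the least second moment among sets of that
area (bathtub principle: `‖x‖² ≤ r²` on `B' \ Ω` and `‖x‖² ≥ r²` on `Ω \ B'`, two sets of equal
area); hence the constant `36`.
-/

open MeasureTheory Metric Set

section MeasureSpace

variable {α : Type*} [MeasurableSpace α] {μ : Measure α} {s t : Set α}

theorem measureReal_lt_two_mul_measureReal_inter (ht : MeasurableSet t) (hs : μ s ≠ ⊤)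
    (h : μ (s \ t) < μ s / 2) : μ.real s < 2 * μ.real (s ∩ t) := by
  have hdiff : μ.real (s \ t) < μ.real s / 2 := by
    simpa [Measure.real, ENNReal.toReal_div] using
      (ENNReal.toReal_lt_toReal (measure_ne_top_of_subset sdiff_subset hs)
        (ENNReal.div_ne_top hs two_ne_zero)).2 h
  linarith [measureReal_inter_add_sdiff ht hs]

variable {f g : α → ℝ}

theorem measureReal_mul_setIntegral_le_of_forall_le (hs : MeasurableSet s)
    (ht : MeasurableSet t) (hs_fin : μ s ≠ ⊤) (ht_fin : μ t ≠ ⊤)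
    (hf : IntegrableOn f s μ) (hg : IntegrableOn g t μ) (hfg : ∀ x ∈ s, ∀ y ∈ t, f x ≤ g y) :
    μ.real t * ∫ x in s, f x ∂μ ≤ μ.real s * ∫ y in t, g y ∂μ := by
  have hpoint : ∀ y ∈ t, ∫ x in s, f x ∂μ ≤ μ.real s * g y := fun y hy => by
    simpa [setIntegral_const] using
      setIntegral_mono_on hf (integrableOn_const hs_fin) hs fun x hx => hfg x hx y hy
  calc μ.real t * ∫ x in s, f x ∂μ = ∫ _ in t, ∫ x in s, f x ∂μ ∂μ := by
        rw [setIntegral_const, smul_eq_mul]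
    _ ≤ ∫ y in t, μ.real s * g y ∂μ :=
        setIntegral_mono_on (integrableOn_const ht_fin) (hg.const_mul _) ht hpoint
    _ = μ.real s * ∫ y in t, g y ∂μ := integral_const_mul _ _

theorem setIntegral_le_setIntegral_of_measure_eq (hs : MeasurableSet s) (ht : MeasurableSet t)
    (hst : μ s = μ t) (hs_fin : μ s ≠ ⊤) (hfs : IntegrableOn f s μ) (hft : IntegrableOn f t μ)
    {a : ℝ} (h_le : ∀ x ∈ s \ t, f x ≤ a) (h_ge : ∀ x ∈ t \ s, a ≤ f x) :
    ∫ x in s, f x ∂μ ≤ ∫ x in t, f x ∂μ := by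
  have hdiff : μ.real (s \ t) = μ.real (t \ s) := by
    simp only [Measure.real, measure_sdiff_symm hs.nullMeasurableSet ht.nullMeasurableSet hst
      (measure_ne_top_of_subset inter_subset_left hs_fin)]
  have hst_fin : μ (s \ t) ≠ ⊤ := measure_ne_top_of_subset sdiff_subset hs_fin
  have hts_fin : μ (t \ s) ≠ ⊤ := measure_ne_top_of_subset sdiff_subset (hst ▸ hs_fin)
  have h_upper : ∫ x in s \ t, f x ∂μ ≤ μ.real (s \ t) * a := by
    simpa [setIntegral_const] using setIntegral_mono_on (hfs.mono_set sdiff_subset)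
      (integrableOn_const hst_fin) (hs.diff ht) h_le
  have h_lower : μ.real (t \ s) * a ≤ ∫ x in t \ s, f x ∂μ := by
    simpa [setIntegral_const] using setIntegral_mono_on (integrableOn_const hts_fin)
      (hft.mono_set sdiff_subset) (ht.diff hs) h_ge
  rw [hdiff] at h_upper
  rw [← integral_inter_add_sdiff ht hfs, ← integral_inter_add_sdiff hs hft, inter_comm t s]
  linarith

end MeasureSpace

theorem sq_norm_le_of_mem_ball {E : Type*} [SeminormedAddCommGroup E] {c x y : E} {r : ℝ}
    (hx : x ∈ ball c r) (hy : y ∈ ball c r) :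
    ‖x‖ ^ 2 ≤ 2 * ‖y‖ ^ 2 + 8 * r ^ 2 := by
  have hxy : ‖x - y‖ ≤ 2 * r := by
    rw [← dist_eq_norm]
    linarith [dist_triangle_right x y c, mem_ball.1 hx, mem_ball.1 hy]
  calc ‖x‖ ^ 2 ≤ (‖y‖ + ‖x - y‖) ^ 2 := by gcongr; exact norm_le_norm_add_norm_sub' x y
    _ ≤ 2 * (‖y‖ ^ 2 + ‖x - y‖ ^ 2) := add_sq_le
    _ ≤ 2 * (‖y‖ ^ 2 + (2 * r) ^ 2) := by gcongr
    _ = 2 * ‖y‖ ^ 2 + 8 * r ^ 2 := by ring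

section NormedSpace

variable {E : Type*} [NormedAddCommGroup E] [ProperSpace E] [MeasurableSpace E] [BorelSpace E]
  {μ : Measure E} [IsFiniteMeasureOnCompacts μ]

theorem integrableOn_sq_norm_of_isBounded {s : Set E} (hs : Bornology.IsBounded s) :
    IntegrableOn (fun x => ‖x‖ ^ 2) s μ :=
  ((continuous_norm.pow 2).locallyIntegrable.integrableOn_isCompact
    hs.isCompact_closure).mono_set subset_closure

theorem setIntegral_ball_sq_norm_le {Ω : Set E} {c : E} {r : ℝ} (hΩ : MeasurableSet Ω)
    (hhalf : μ.real (ball c r) < 2 * μ.real (ball c r ∩ Ω)) :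
    ∫ x in ball c r, ‖x‖ ^ 2 ∂μ ≤
      4 * ∫ x in ball c r ∩ Ω, ‖x‖ ^ 2 ∂μ + 8 * r ^ 2 * μ.real (ball c r) := by
  have hB : μ (ball c r) ≠ ⊤ := measure_ball_lt_top.ne
  have hBΩ : μ (ball c r ∩ Ω) ≠ ⊤ := measure_ne_top_of_subset inter_subset_left hB
  have hsq_int : IntegrableOn (fun x => ‖x‖ ^ 2) (ball c r ∩ Ω) μ :=
    integrableOn_sq_norm_of_isBounded (isBounded_ball.subset inter_subset_left)
  have hbound_int : IntegrableOn (fun y => 2 * ‖y‖ ^ 2 + 8 * r ^ 2) (ball c r ∩ Ω) μ :=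
    (hsq_int.const_mul 2).add (integrableOn_const hBΩ)
  have havg := measureReal_mul_setIntegral_le_of_forall_le measurableSet_ball
    (measurableSet_ball.inter hΩ) hB hBΩ (integrableOn_sq_norm_of_isBounded isBounded_ball)
    hbound_int
    fun x hx y hy => sq_norm_le_of_mem_ball hx hy.1
  rw [integral_add (hsq_int.const_mul 2) (integrableOn_const hBΩ), integral_const_mul,
    setIntegral_const, smul_eq_mul] at havg
  have hM : 0 ≤ ∫ x in ball c r ∩ Ω, ‖x‖ ^ 2 ∂μ :=
    setIntegral_nonneg (measurableSet_ball.inter hΩ) fun x _ => by positivity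
  have hpos : 0 < μ.real (ball c r ∩ Ω) := by
    linarith [measureReal_nonneg (μ := μ) (s := ball c r)]
  refine le_of_mul_le_mul_left ?_ hpos
  nlinarith [mul_nonneg (sub_nonneg.2 hhalf.le) hM]

theorem setIntegral_ball_zero_sq_norm_le {Ω : Set E} {r : ℝ} (hr : 0 ≤ r)
    (hΩ : MeasurableSet Ω) (hbdd : Bornology.IsBounded Ω) (hvol : μ (ball 0 r) = μ Ω) :
    ∫ x in ball 0 r, ‖x‖ ^ 2 ∂μ ≤ ∫ x in Ω, ‖x‖ ^ 2 ∂μ :=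
  setIntegral_le_setIntegral_of_measure_eq measurableSet_ball hΩ hvol measure_ball_lt_top.ne
    (integrableOn_sq_norm_of_isBounded isBounded_ball) (integrableOn_sq_norm_of_isBounded hbdd)
    (a := r ^ 2)
    (fun x hx => by gcongr; exact (mem_ball_zero_iff.1 hx.1).le)
    (fun x hx => by gcongr; exact not_lt.1 (mt mem_ball_zero_iff.2 hx.2))

end NormedSpace

theorem setIntegral_ball_zero_sq_norm {E : Type*} [NormedAddCommGroup E] [NormedSpace ℝ E]
    [Nontrivial E] [FiniteDimensional ℝ E] [MeasurableSpace E] [BorelSpace E]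
    (μ : Measure E) [μ.IsAddHaarMeasure] {r : ℝ} (hr : 0 ≤ r) :
    ∫ x in ball (0 : E) r, ‖x‖ ^ 2 ∂μ =
      Module.finrank ℝ E / (Module.finrank ℝ E + 2) * μ.real (ball 0 1) *
        r ^ (Module.finrank ℝ E + 2) := by
  have hradial := integral_fun_norm_addHaar μ ((Iio r).indicator fun y => y ^ 2)
  set n := Module.finrank ℝ E
  have hn : 0 < n := Module.finrank_pos
  have hlhs : ∫ x, (Iio r).indicator (fun y => y ^ 2) ‖x‖ ∂μ =
      ∫ x in ball (0 : E) r, ‖x‖ ^ 2 ∂μ := by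
    rw [← integral_indicator measurableSet_ball]
    congr 1 with x
    simp [indicator]
  have hrhs : ∫ y in Ioi (0 : ℝ), y ^ (n - 1) • (Iio r).indicator (fun y => y ^ 2) y =
      r ^ (n + 2) / (n + 2) := by
    have hpow : ∀ y : ℝ, y ^ (n - 1) • (Iio r).indicator (fun y => y ^ 2) y =
        (Iio r).indicator (fun y => y ^ (n + 1)) y := fun y => by
      by_cases hy : y < r
      · simp [hy, smul_eq_mul, ← pow_add, show n - 1 + 2 = n + 1 by omega]
      · simp [hy]
    simp_rw [hpow]
    rw [setIntegral_indicator measurableSet_Iio, Ioi_inter_Iio, ← integral_Ioc_eq_integral_Ioo,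
      ← intervalIntegral.integral_of_le hr, integral_pow]
    push_cast
    ring
  rw [← hlhs, hradial, hrhs, nsmul_eq_mul, smul_eq_mul]
  field_simp

theorem EuclideanSpace.volume_real_ball_fin_two (c : EuclideanSpace ℝ (Fin 2)) {r : ℝ}
    (hr : 0 ≤ r) : volume.real (ball c r) = Real.pi * r ^ 2 := by
  simp [Measure.real, hr, Real.pi_pos.le, mul_comm]

theorem EuclideanSpace.setIntegral_ball_zero_sq_norm_fin_two {r : ℝ} (hr : 0 ≤ r) :
    ∫ x in ball (0 : EuclideanSpace ℝ (Fin 2)) r, ‖x‖ ^ 2 = Real.pi * r ^ 4 / 2 := by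
  rw [setIntegral_ball_zero_sq_norm volume hr, volume_real_ball_fin_two 0 zero_le_one]
  norm_num
  ring

theorem stmt11_general (Ω : Set (EuclideanSpace ℝ (Fin 2)))
    (hmeas : MeasurableSet Ω) (hbdd : Bornology.IsBounded Ω)
    (c : EuclideanSpace ℝ (Fin 2)) (r : ℝ)
    (hvol : volume (Metric.ball c r) = volume Ω)
    (hhalf : volume (Metric.ball c r \ Ω) < volume (Metric.ball c r) / 2) :
    (∫ x in Metric.ball c r, ‖x‖ ^ 2) ≤
        4 * (∫ x in Ω, ‖x‖ ^ 2) + (16 / Real.pi) * (volume Ω).toReal ^ 2 ∧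
    (∫ x in Metric.ball c r, ‖x‖ ^ 2) ≤ 36 * ∫ x in Ω, ‖x‖ ^ 2 := by
  have hhalf' := measureReal_lt_two_mul_measureReal_inter hmeas measure_ball_lt_top.ne hhalf
  have hr : 0 < r := by
    by_contra! h
    simp [ball_eq_empty.2 h] at hhalf'
  have hB := EuclideanSpace.volume_real_ball_fin_two c hr.le
  have hΩ : (volume Ω).toReal = Real.pi * r ^ 2 := by rw [← hvol]; exact hB
  have hA := setIntegral_ball_sq_norm_le hmeas hhalf'
  have hmono : ∫ x in ball c r ∩ Ω, ‖x‖ ^ 2 ≤ ∫ x in Ω, ‖x‖ ^ 2 :=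
    setIntegral_mono_set (integrableOn_sq_norm_of_isBounded hbdd)
      (Filter.Eventually.of_forall fun x => by positivity) inter_subset_right.eventuallyLE
  have hbathtub : Real.pi * r ^ 4 / 2 ≤ ∫ x in Ω, ‖x‖ ^ 2 := by
    rw [← EuclideanSpace.setIntegral_ball_zero_sq_norm_fin_two hr.le]
    exact setIntegral_ball_zero_sq_norm_le hr.le hmeas hbdd (by rw [← hvol]; simp)
  have hfirst : ∫ x in ball c r, ‖x‖ ^ 2 ≤
      4 * (∫ x in Ω, ‖x‖ ^ 2) + (16 / Real.pi) * (volume Ω).toReal ^ 2 := by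
    rw [hB] at hA
    rw [hΩ, show 16 / Real.pi * (Real.pi * r ^ 2) ^ 2 =
      8 * r ^ 2 * (Real.pi * r ^ 2) + 8 * Real.pi * r ^ 4 by field_simp; ring]
    linarith [show 0 ≤ 8 * Real.pi * r ^ 4 by positivity]
  refine ⟨hfirst, ?_⟩
  rw [hΩ, show 16 / Real.pi * (Real.pi * r ^ 2) ^ 2 = 32 * (Real.pi * r ^ 4 / 2) by
    field_simp; ring] at hfirst
  linarith

/-- If `B_Ω` is a disk with `|B_Ω| = |Ω|` and `|B_Ω \ Ω| < |B_Ω|/2`, then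
`M₂[χ_{B_Ω}] ≤ 4·M₂[χ_Ω] + (16/π)|Ω|²`, and consequently `M₂[χ_{B_Ω}] ≤ 36·M₂[χ_Ω]`. -/
theorem stmt11 (Ω : Set (EuclideanSpace ℝ (Fin 2)))
    (hmeas : MeasurableSet Ω) (hbdd : Bornology.IsBounded Ω)
    (c : EuclideanSpace ℝ (Fin 2)) (r : ℝ) (hr : 0 ≤ r)
    (hvol : volume (Metric.ball c r) = volume Ω)
    (hhalf : volume (Metric.ball c r \ Ω) < volume (Metric.ball c r) / 2) :
    (∫ x in Metric.ball c r, ‖x‖ ^ 2) ≤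
        4 * (∫ x in Ω, ‖x‖ ^ 2) + (16 / Real.pi) * (volume Ω).toReal ^ 2 ∧
    (∫ x in Metric.ball c r, ‖x‖ ^ 2) ≤ 36 * ∫ x in Ω, ‖x‖ ^ 2 :=
  stmt11_general Ω hmeas hbdd c r hvol hhalf
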